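/- arXiv:1806.02560 — 4 statements merged into one kernel-verified Lean document; each statement's English description precedes it below -/
import Mathlib

section
/- Let p be a prime and a a positive integer, and set b = p^a. Then the sequence (ℓ_b(n!))_{n∈ℕ} of last nonzero digits of n! in base b is b-automatic. -/
/-!
Write `n! = p ^ v * w` with `p ∤ w`. The last nonzero base-`p ^ a` digit of `n!` is
`p ^ (v mod a) * w mod p ^ a`. Splitting off the multiples of `p` gives
`N! = p ^ ⌊N/p⌋ * ⌊N/p⌋! * U N`, where `U N` is the product of the integers in `[1, N]` prime
to `p`, and `U N mod p ^ a` only depends on `N mod p ^ a * φ (p ^ a)`. So the finite state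
`(n mod p ^ a * φ (p ^ a), n mod a, v mod a, w mod p ^ a)` of `n` determines that of `p n + d`
for every digit `d < p`, hence that of `p ^ a n + d` for every `d < p ^ a`, and a sequence
determined by such a state is automatic.
-/

/-- The state reached after feeding the base-`k` digits of `n`
(most significant digit first, empty string for `n = 0`) into the
transition function `ρ` starting from state `q₀`. -/
def autoRun {Q : Type} (k : ℕ) (ρ : Q → Fin k → Q) (q₀ : Q) (n : ℕ) : Q :=
  (Nat.digits k n).reverse.foldl (fun q d => if h : d < k then ρ q ⟨d, h⟩ else q) q₀

/-- A sequence `a : ℕ → Δ` is `k`-automatic: some DFAO over the alphabet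
`{0, …, k-1}` computes `a n` from the base-`k` digits of `n`
(most significant digit first). -/
def IsAutomatic {Δ : Type*} (k : ℕ) (a : ℕ → Δ) : Prop :=
  ∃ (Q : Type) (_ : Finite Q) (ρ : Q → Fin k → Q) (q₀ : Q) (τ : Q → Δ),
    ∀ n : ℕ, a n = τ (autoRun k ρ q₀ n)

/-- `lnz b n` is the last nonzero digit of `n` in base `b`:
`(n / b ^ v_b(n)) % b`, where `v_b(n) = padicValNat b n` is the largest `t`
with `b ^ t ∣ n`. -/
def lnz (b n : ℕ) : ℕ := (n / b ^ padicValNat b n) % b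

/-- `digSum b n` is the sum of the digits of `n` written in base `b`. -/
def digSum (b n : ℕ) : ℕ := (Nat.digits b n).sum

open Nat

section Automata

variable {Q : Type} {k : ℕ}

theorem autoRun_zero (ρ : Q → Fin k → Q) (q₀ : Q) : autoRun k ρ q₀ 0 = q₀ := by
  simp [autoRun]

theorem autoRun_of_pos (hk : 1 < k) (ρ : Q → Fin k → Q) (q₀ : Q) {n : ℕ} (hn : 0 < n) :
    autoRun k ρ q₀ n = ρ (autoRun k ρ q₀ (n / k)) ⟨n % k, Nat.mod_lt n (by omega)⟩ := by
  rw [autoRun, Nat.digits_def' hk hn, List.reverse_cons, List.foldl_append]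
  simp [autoRun, Nat.mod_lt n (by omega : 0 < k)]

/-- The kernel of `f` is a right congruence for appending a base-`k` digit. -/
def IsRightCongr (k : ℕ) (f : ℕ → Q) : Prop :=
  ∀ m n d, d < k → f m = f n → f (k * m + d) = f (k * n + d)

theorem IsRightCongr.pow {f : ℕ → Q} (hf : IsRightCongr k f) (j : ℕ) :
    IsRightCongr (k ^ j) f := by
  induction j with
  | zero =>
    intro m n d hd h
    obtain rfl : d = 0 := by simpa using hd
    simpa using h
  | succ j ih =>
    intro m n d hd h
    have hk : 0 < k := Nat.pos_of_ne_zero (by rintro rfl; simp at hd)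
    have split : ∀ x, k ^ (j + 1) * x + d = k * (k ^ j * x + d / k) + d % k := fun x => by
      rw [pow_succ]; nth_rw 1 [← Nat.div_add_mod d k]; ring
    rw [split, split]
    exact hf _ _ _ (Nat.mod_lt d hk)
      (ih _ _ _ (Nat.div_lt_of_lt_mul (by rwa [← pow_succ'])) h)

theorem IsAutomatic.of_isRightCongr {Δ : Type*} [Finite Q] (hk : 1 < k) {f : ℕ → Q}
    (hf : IsRightCongr k f) {a : ℕ → Δ} (ha : ∀ m n, f m = f n → a m = a n) :
    IsAutomatic k a := by
  classical
  have hsec : ∀ n, f (Function.invFun f (f n)) = f n := fun n =>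
    Function.invFun_eq ⟨n, rfl⟩
  refine ⟨Q, inferInstance, fun q d => f (k * Function.invFun f q + d), f 0,
    fun q => a (Function.invFun f q), fun n => ?_⟩
  suffices hrun : autoRun k (fun q d => f (k * Function.invFun f q + d)) (f 0) n = f n by
    rw [hrun]; exact ha _ _ (hsec n).symm
  induction n using Nat.strong_induction_on with
  | _ n ih =>
    rcases Nat.eq_zero_or_pos n with rfl | hn
    · exact autoRun_zero _ _
    rw [autoRun_of_pos hk _ _ hn, ih _ (Nat.div_lt_self hn hk)]
    conv_rhs => rw [← Nat.div_add_mod n k]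
    exact hf _ _ _ (Nat.mod_lt n (by omega)) (hsec _)

end Automata

section NonMultiples

/-- `∏_{1 ≤ i ≤ N, p ∤ i} i`. -/
def prodNonMultiples (p N : ℕ) : ℕ := ∏ i ∈ Finset.range N, if p ∣ i + 1 then 1 else i + 1

variable {p : ℕ}

theorem prodNonMultiples_succ (p N : ℕ) :
    prodNonMultiples p (N + 1) =
      if p ∣ N + 1 then prodNonMultiples p N else (N + 1) * prodNonMultiples p N := by
  rw [prodNonMultiples, Finset.prod_range_succ, ← prodNonMultiples]
  split_ifs <;> ring

theorem not_dvd_prodNonMultiples (hp : p.Prime) (N : ℕ) : ¬ p ∣ prodNonMultiples p N := by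
  induction N with
  | zero => simpa [prodNonMultiples] using hp.ne_one
  | succ N ih =>
    rw [prodNonMultiples_succ]
    split_ifs with h
    · exact ih
    · exact fun hd => (hp.dvd_mul.mp hd).elim h ih

theorem factorial_eq_pow_mul_factorial_mul_prodNonMultiples (hp : 0 < p) (N : ℕ) :
    N ! = p ^ (N / p) * (N / p)! * prodNonMultiples p N := by
  induction N with
  | zero => simp [prodNonMultiples]
  | succ N ih =>
    rw [prodNonMultiples_succ, factorial_succ, ih]
    split_ifs with h
    · obtain ⟨c, hc⟩ := h
      have hdiv : (N + 1) / p = N / p + 1 := Nat.succ_div_of_dvd ⟨c, hc⟩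
      have hc' : N / p + 1 = c := by
        rw [← hdiv, hc, Nat.mul_div_cancel_left c hp]
      rw [hdiv, factorial_succ, pow_succ, hc, hc']
      ring
    · rw [Nat.succ_div_of_not_dvd h]
      ring

theorem ordCompl_factorial (hp : p.Prime) (N : ℕ) :
    ordCompl[p] N ! = ordCompl[p] (N / p)! * prodNonMultiples p N := by
  rw [factorial_eq_pow_mul_factorial_mul_prodNonMultiples hp.pos, mul_assoc,
    ordCompl_self_pow_mul _ _ hp, ordCompl_mul,
    (ordCompl_eq_self_iff_zero_or_not_dvd _ hp).mpr (Or.inr (not_dvd_prodNonMultiples hp N))]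

theorem padicValNat_factorial_eq_div_add (hp : p.Prime) (N : ℕ) :
    padicValNat p N ! = N / p + padicValNat p (N / p)! := by
  have : Fact p.Prime := ⟨hp⟩
  rw [← padicValNat_mul_div_factorial, padicValNat_factorial_mul, add_comm]

/-- As `p ∣ q`, the shift `i ↦ q + i` preserves both divisibility by `p` and residues mod `q`. -/
theorem prodNonMultiples_add_cast {q : ℕ} (hpq : p ∣ q) (N : ℕ) :
    (prodNonMultiples p (q + N) : ZMod q) = prodNonMultiples p q * prodNonMultiples p N := by
  simp only [prodNonMultiples, Finset.prod_range_add, Nat.cast_mul, Nat.cast_prod]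
  congr 1
  refine Finset.prod_congr rfl fun i _ => ?_
  have hdvd : p ∣ q + i + 1 ↔ p ∣ i + 1 := by
    rw [add_assoc]; exact Nat.dvd_add_right hpq
  simp only [hdvd]
  split_ifs
  · rfl
  · push_cast; rw [ZMod.natCast_self, zero_add]

theorem prodNonMultiples_mul_add_cast {q : ℕ} (hpq : p ∣ q) (c r : ℕ) :
    (prodNonMultiples p (q * c + r) : ZMod q) =
      (prodNonMultiples p q : ZMod q) ^ c * prodNonMultiples p r := by
  induction c with
  | zero => simp
  | succ c ih =>
    rw [mul_add_one, add_right_comm, add_comm, prodNonMultiples_add_cast hpq, ih, pow_succ]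
    ring

/-- Since `prodNonMultiples p (p ^ a)` is a unit modulo `p ^ a`, Euler's theorem makes
`N ↦ prodNonMultiples p N mod p ^ a` periodic with period `p ^ a * φ (p ^ a)`. -/
theorem prodNonMultiples_cast_eq_of_modEq (hp : p.Prime) {a : ℕ} (ha : 0 < a) {N N' : ℕ}
    (h : N ≡ N' [MOD p ^ a * φ (p ^ a)]) :
    (prodNonMultiples p N : ZMod (p ^ a)) = prodNonMultiples p N' := by
  have hpq : p ∣ p ^ a := dvd_pow_self p ha.ne'
  have hunit : (prodNonMultiples p (p ^ a) : ZMod (p ^ a)) ^ φ (p ^ a) = 1 := by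
    have hcop : (prodNonMultiples p (p ^ a)).Coprime (p ^ a) :=
      ((hp.coprime_iff_not_dvd.mpr (not_dvd_prodNonMultiples hp _)).pow_left a).symm
    exact_mod_cast (ZMod.natCast_eq_natCast_iff _ _ _).mpr (Nat.ModEq.pow_totient hcop)
  have hred : ∀ M, (prodNonMultiples p M : ZMod (p ^ a)) =
      (prodNonMultiples p (p ^ a) : ZMod (p ^ a)) ^ (M % (p ^ a * φ (p ^ a)) / p ^ a) *
        prodNonMultiples p (M % (p ^ a * φ (p ^ a)) % p ^ a) := fun M => by
    rw [Nat.mod_mul_right_div_self, Nat.mod_mul_right_mod, ← pow_eq_pow_mod _ hunit,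
      ← prodNonMultiples_mul_add_cast hpq, Nat.div_add_mod]
  rw [hred N, hred N', h]

end NonMultiples

section LastNonzeroDigit

variable {p a : ℕ}

theorem padicValNat_prime_pow (hp : p.Prime) (ha : 0 < a) {m : ℕ} (hm : m ≠ 0) :
    padicValNat (p ^ a) m = padicValNat p m / a := by
  have : Fact p.Prime := ⟨hp⟩
  refine eq_of_forall_le_iff fun t => ?_
  rw [← pow_dvd_iff_le_padicValNat (Nat.one_lt_pow ha.ne' hp.one_lt).ne' hm, ← pow_mul,
    padicValNat_dvd_iff_le hm, Nat.le_div_iff_mul_le ha, mul_comm]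

theorem lnz_prime_pow (hp : p.Prime) (ha : 0 < a) {m : ℕ} (hm : m ≠ 0) :
    lnz (p ^ a) m = p ^ (padicValNat p m % a) * ordCompl[p] m % p ^ a := by
  have hsplit : m =
      (p ^ a) ^ (padicValNat p m / a) * (p ^ (padicValNat p m % a) * ordCompl[p] m) := by
    rw [← mul_assoc, ← pow_mul, ← pow_add, Nat.div_add_mod, ← factorization_def m hp,
      ordProj_mul_ordCompl_eq_self]
  rw [lnz, padicValNat_prime_pow hp ha hm]
  nth_rewrite 1 [hsplit]
  rw [Nat.mul_div_cancel_left _ (pow_pos (pow_pos hp.pos a) _)]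

/-- Enough information on `n` to read off `lnz (p ^ a) n !` and to update it when a base-`p`
digit is appended to `n`. -/
def lnzState (p a n : ℕ) : ZMod (p ^ a * φ (p ^ a)) × ZMod a × ZMod a × ZMod (p ^ a) :=
  (n, n, padicValNat p n !, ordCompl[p] n !)

theorem isRightCongr_lnzState (hp : p.Prime) (ha : 0 < a) : IsRightCongr p (lnzState p a) := by
  intro m n d hd h
  simp only [lnzState, Prod.mk.injEq] at h ⊢
  obtain ⟨h₁, h₂, h₃, h₄⟩ := h
  have hdiv : ∀ x, (p * x + d) / p = x := fun x => by
    rw [Nat.mul_add_div hp.pos, Nat.div_eq_of_lt hd, add_zero]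
  have hU : (prodNonMultiples p (p * m + d) : ZMod (p ^ a)) = prodNonMultiples p (p * n + d) :=
    prodNonMultiples_cast_eq_of_modEq hp ha <|
      (ZMod.natCast_eq_natCast_iff _ _ _).mp (by push_cast; rw [h₁])
  rw [padicValNat_factorial_eq_div_add hp, padicValNat_factorial_eq_div_add hp (p * n + d),
    ordCompl_factorial hp, ordCompl_factorial hp (p * n + d), hdiv, hdiv]
  push_cast
  exact ⟨by rw [h₁], by rw [h₂], by rw [h₂, h₃], by rw [h₄, hU]⟩

theorem lnz_factorial_eq_of_lnzState_eq (hp : p.Prime) (ha : 0 < a) (m n : ℕ)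
    (h : lnzState p a m = lnzState p a n) : lnz (p ^ a) m ! = lnz (p ^ a) n ! := by
  simp only [lnzState, Prod.mk.injEq, ZMod.natCast_eq_natCast_iff'] at h
  rw [lnz_prime_pow hp ha (factorial_ne_zero m), lnz_prime_pow hp ha (factorial_ne_zero n),
    Nat.mul_mod, Nat.pow_mod, h.2.2.1, h.2.2.2, ← Nat.pow_mod, ← Nat.mul_mod]

end LastNonzeroDigit

/-- If `b = p ^ a` with `p` prime and `a ≥ 1`, then the sequence of last
nonzero digits of `n !` in base `b` is `b`-automatic. -/
theorem lnz_factorial_automatic_of_prime_pow (p a : ℕ) (hp : p.Prime) (ha : 0 < a) :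
    IsAutomatic (p ^ a) (fun n => lnz (p ^ a) (Nat.factorial n)) := by
  have hq : 1 < p ^ a := Nat.one_lt_pow ha.ne' hp.one_lt
  have : NeZero a := ⟨ha.ne'⟩
  have : NeZero (p ^ a) := ⟨by omega⟩
  have : NeZero (p ^ a * φ (p ^ a)) :=
    ⟨(Nat.mul_pos (by omega) (totient_pos.mpr (by omega))).ne'⟩
  exact IsAutomatic.of_isRightCongr hq ((isRightCongr_lnzState hp ha).pow a)
    (lnz_factorial_eq_of_lnzState_eq hp ha)
end

section
/- Let P be a non-empty finite set of prime numbers and let p be its largest element. Let a > 0 and k > 1 be integers. Then there exists a positive integer a' such that max_{q∈P} s_q(a') = s_p(a') and the base-k digit string of a is a prefix of the base-k digit string of a'. -/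
/-!
Take `n ≡ -1 (mod p ^ M)`, so that its lowest `M` base-`p` digits are all `p - 1` and
`s_p(n) ≥ M (p - 1)`, and of the form `k ^ m * a + r` with `r < k ^ m ≤ k * p ^ M`: then `n`
extends the base-`k` digit string of `a` and `n < k (a + 1) p ^ M`. For a prime `q < p`,
`s_q(n) ≤ (q - 1) log_q (q n)`, which is about `M (q - 1) log p / log q`; this is below
`M (p - 1)` for large `M` because `p ^ (q - 1) < q ^ (p - 1)`.
-/

open Filter Topology

lemma pow_pred_lt_pow_pred {q p : ℕ} (hq : 2 ≤ q) (hqp : q < p) : p ^ (q - 1) < q ^ (p - 1) := by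
  have hq0 : (0 : ℝ) < q := by positivity
  have hqp' : (q : ℝ) < p := by exact_mod_cast hqp
  have hp0 : (0 : ℝ) < p := hq0.trans hqp'
  have hlog_div : Real.log p - Real.log q ≤ p / q - 1 := by
    rw [← Real.log_div (by positivity) hq0.ne']
    exact Real.log_le_sub_one_of_pos (by positivity)
  have hlog_q : 1 - 1 / (q : ℝ) < Real.log q := by
    have h := Real.log_lt_sub_one_of_pos (x := 1 / (q : ℝ)) (by positivity)
      (by rw [ne_eq, div_eq_one_iff_eq hq0.ne']; norm_cast; omega)
    rw [one_div, Real.log_inv] at h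
    rw [one_div]
    linarith
  have key : ((q : ℝ) - 1) * Real.log p < ((p : ℝ) - 1) * Real.log q := by
    have hq1 : (0 : ℝ) ≤ q - 1 := by
      have : (2 : ℝ) ≤ q := by exact_mod_cast hq
      linarith
    calc ((q : ℝ) - 1) * Real.log p
        ≤ (q - 1) * Real.log q + (q - 1) * (p / q - 1) := by
          nlinarith [mul_le_mul_of_nonneg_left hlog_div hq1]
      _ = (q - 1) * Real.log q + (p - q) * (1 - 1 / q) := by field_simp
      _ < (q - 1) * Real.log q + (p - q) * Real.log q := by gcongr
      _ = (p - 1) * Real.log q := by ring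
  have : (p : ℝ) ^ (q - 1) < (q : ℝ) ^ (p - 1) := by
    rw [← Real.log_lt_log_iff (by positivity) (by positivity), Real.log_pow, Real.log_pow,
      Nat.cast_sub (by omega), Nat.cast_sub (by omega), Nat.cast_one]
    exact key
  exact_mod_cast this

lemma eventually_mul_pow_le_pow {A B : ℕ} (h : A < B) (C : ℕ) :
    ∀ᶠ M in atTop, C * A ^ M ≤ B ^ M := by
  have hB : (0 : ℝ) < B := by exact_mod_cast (Nat.zero_le A).trans_lt h
  have hlim : Tendsto (fun M : ℕ => (C : ℝ) * ((A : ℝ) / B) ^ M) atTop (𝓝 0) := by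
    simpa using (tendsto_pow_atTop_nhds_zero_of_lt_one (by positivity)
      ((div_lt_one hB).2 (by exact_mod_cast h))).const_mul (C : ℝ)
  filter_upwards [hlim.eventually (ge_mem_nhds one_pos)] with M hM
  rw [div_pow, mul_div_assoc', div_le_one (by positivity)] at hM
  exact_mod_cast hM

lemma digSum_le_length_mul {b : ℕ} (hb : 1 < b) (n : ℕ) :
    digSum b n ≤ (Nat.digits b n).length * (b - 1) := by
  simpa [digSum] using
    List.sum_le_card_nsmul _ _ fun d hd => Nat.le_pred_of_lt (Nat.digits_lt_base hb hd)

lemma pow_digSum_le {b n : ℕ} (hb : 1 < b) (hn : n ≠ 0) : b ^ digSum b n ≤ (b * n) ^ (b - 1) :=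
  calc b ^ digSum b n ≤ b ^ ((Nat.digits b n).length * (b - 1)) :=
        Nat.pow_le_pow_right (by omega) (digSum_le_length_mul hb n)
    _ = (b ^ (Nat.digits b n).length) ^ (b - 1) := pow_mul _ _ _
    _ ≤ (b * n) ^ (b - 1) := Nat.pow_le_pow_left (Nat.base_pow_length_digits_le b n hb hn) _

lemma digSum_mod_pow_le {b : ℕ} (hb : 1 < b) (n M : ℕ) : digSum b (n % b ^ M) ≤ digSum b n := by
  rcases Nat.eq_zero_or_pos (n / b ^ M) with h | h
  · rw [Nat.mod_eq_of_lt ((Nat.div_eq_zero_iff_lt (by positivity)).1 h)]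
  have hlen : (Nat.digits b (n % b ^ M)).length ≤ M :=
    (Nat.digits_length_le_iff hb _).2 (Nat.mod_lt _ (by positivity))
  have hdigits := Nat.digits_append_zeroes_append_digits
    (k := M - (Nat.digits b (n % b ^ M)).length) (n := n % b ^ M) hb h
  rw [Nat.add_sub_cancel' hlen, Nat.mod_add_div] at hdigits
  simp only [digSum, ← hdigits, List.sum_append]
  omega

lemma digSum_ofDigits_replicate {b : ℕ} (hb : 1 < b) (M : ℕ) :
    digSum b (Nat.ofDigits b (List.replicate M (b - 1))) = M * (b - 1) := by
  rw [digSum, Nat.sum_digits_ofDigits_eq_sum hb (l := M)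
    ⟨List.length_replicate, fun d hd => (List.eq_of_mem_replicate hd).trans_lt (by omega)⟩]
  simp

lemma reverse_digits_prefix_reverse_digits_add_pow_mul {k a r m : ℕ} (hk : 1 < k) (ha : 0 < a)
    (hr : r < k ^ m) : (Nat.digits k a).reverse <+: (Nat.digits k (r + k ^ m * a)).reverse := by
  have hlen : (Nat.digits k r).length ≤ m := (Nat.digits_length_le_iff hk r).2 hr
  have hdigits := Nat.digits_append_zeroes_append_digits
    (k := m - (Nat.digits k r).length) (n := r) hk ha
  rw [Nat.add_sub_cancel' hlen] at hdigits
  rw [List.reverse_prefix, ← hdigits]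
  exact List.suffix_append _ _

lemma exists_mod_eq_lt_and_reverse_digits_prefix {k a N c : ℕ} (hk : 1 < k) (ha : 0 < a)
    (hc : c < N) : ∃ n, n % N = c ∧ n < k * (a + 1) * N ∧
      (Nat.digits k a).reverse <+: (Nat.digits k n).reverse := by
  set m := Nat.log k N + 1
  have hNm : N < k ^ m := Nat.lt_pow_succ_log_self hk N
  have hmN : k ^ m ≤ k * N := by
    rw [pow_succ, mul_comm]
    exact Nat.mul_le_mul_left k (Nat.pow_log_le_self k (by omega))
  set r := (c + (N - 1) * (k ^ m * a)) % N
  have hr : r < N := Nat.mod_lt _ (by omega)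
  refine ⟨r + k ^ m * a, ?_, ?_,
    reverse_digits_prefix_reverse_digits_add_pow_mul hk ha (hr.trans hNm)⟩
  · have : r + k ^ m * a ≡ c + (N - 1) * (k ^ m * a) + k ^ m * a [MOD N] :=
      (Nat.mod_modEq _ _).add_right _
    rw [add_assoc, ← Nat.succ_mul, Nat.succ_eq_add_one, Nat.sub_add_cancel (by omega)] at this
    rw [this, Nat.add_mul_mod_self_left, Nat.mod_eq_of_lt hc]
  · calc r + k ^ m * a < k ^ m * (a + 1) := by linarith
      _ ≤ k * N * (a + 1) := Nat.mul_le_mul_right _ hmN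
      _ = k * (a + 1) * N := by ring

lemma digSum_le_of_lt_mul_pow {q p n C M : ℕ} (hq : 1 < q) (hn : n ≠ 0) (hnC : n < C * p ^ M)
    (hM : (q * C) ^ (q - 1) * (p ^ (q - 1)) ^ M ≤ (q ^ (p - 1)) ^ M) :
    digSum q n ≤ (p - 1) * M := by
  refine (Nat.pow_le_pow_iff_right hq).1 ?_
  calc q ^ digSum q n ≤ (q * n) ^ (q - 1) := pow_digSum_le hq hn
    _ ≤ (q * (C * p ^ M)) ^ (q - 1) := by gcongr
    _ = (q * C) ^ (q - 1) * (p ^ (q - 1)) ^ M := by ring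
    _ ≤ (q ^ (p - 1)) ^ M := hM
    _ = q ^ ((p - 1) * M) := (pow_mul _ _ _).symm

theorem exists_extension_with_max_digit_sum_general (P : Finset ℕ)
    (hprime : ∀ q ∈ P, Nat.Prime q)
    (p : ℕ) (hpP : p ∈ P) (hpmax : ∀ q ∈ P, q ≤ p)
    (a k : ℕ) (ha : 0 < a) (hk : 1 < k) :
    ∃ a' : ℕ, 0 < a' ∧ P.sup (fun q => digSum q a') = digSum p a' ∧
      (Nat.digits k a).reverse <+: (Nat.digits k a').reverse := by
  have hp : 1 < p := (hprime p hpP).one_lt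
  have hlarge : ∀ q ∈ P, ∀ᶠ M in atTop,
      q < p → (q * (k * (a + 1))) ^ (q - 1) * (p ^ (q - 1)) ^ M ≤ (q ^ (p - 1)) ^ M := by
    intro q hq
    by_cases hqp : q < p
    · exact (eventually_mul_pow_le_pow (pow_pred_lt_pow_pred (hprime q hq).two_le hqp) _).mono
        fun _ h _ => h
    · exact .of_forall fun _ h => absurd h hqp
  obtain ⟨M, hM⟩ := ((eventually_all_finset P).2 hlarge).exists
  have hc : Nat.ofDigits p (List.replicate M (p - 1)) < p ^ M := by
    simpa using Nat.ofDigits_lt_base_pow_length hp (l := List.replicate M (p - 1))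
      fun d hd => (List.eq_of_mem_replicate hd).trans_lt (by omega)
  -- the lowest `M` base-`p` digits of `n` are all `p - 1`
  obtain ⟨n, hnmod, hnlt, hprefix⟩ := exists_mod_eq_lt_and_reverse_digits_prefix hk ha hc
  have hn : n ≠ 0 := by
    rintro rfl
    simp [Nat.digits_ne_nil_iff_ne_zero.2 ha.ne'] at hprefix
  have hlow : (p - 1) * M ≤ digSum p n := by
    have := digSum_mod_pow_le hp n M
    rwa [hnmod, digSum_ofDigits_replicate hp, mul_comm] at this
  refine ⟨n, Nat.pos_of_ne_zero hn, le_antisymm (Finset.sup_le fun q hq => ?_)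
    (Finset.le_sup (f := fun q => digSum q n) hpP), hprefix⟩
  rcases (hpmax q hq).lt_or_eq with hqp | rfl
  · exact (digSum_le_of_lt_mul_pow (hprime q hq).one_lt hn hnlt (hM q hq hqp)).trans hlow
  · exact le_rfl

/-- Let `P` be a non-empty finite set of primes with largest element `p`,
and let `a > 0`, `k > 1` be integers.  Then there is a positive integer `a'`
with `max_{q ∈ P} s_q a' = s_p a'` whose base-`k` digit string (most
significant digit first) has the digit string of `a` as a prefix. -/
theorem exists_extension_with_max_digit_sum (P : Finset ℕ) (hne : P.Nonempty)
    (hprime : ∀ q ∈ P, Nat.Prime q)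
    (p : ℕ) (hpP : p ∈ P) (hpmax : ∀ q ∈ P, q ≤ p)
    (a k : ℕ) (ha : 0 < a) (hk : 1 < k) :
    ∃ a' : ℕ, 0 < a' ∧ P.sup (fun q => digSum q a') = digSum p a' ∧
      (Nat.digits k a).reverse <+: (Nat.digits k a').reverse :=
  exists_extension_with_max_digit_sum_general P hprime p hpP hpmax a k ha hk
end

section
/- Let a, b, c be positive integers with b, c ≥ 2 such that ln(b)/ln(c) is irrational. Then there exist infinitely many triples of non-negative integers (d, e, f) with 1 ≤ f < b^e such that c^d = a·b^e + f. Equivalently, there are infinitely many powers of c whose base-b representation begins with the base-b digit string of a. -/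
/-!
Writing `c ^ d = a * b ^ e + f` with `1 ≤ f < b ^ e` as `a * b ^ e < c ^ d < (a + 1) * b ^ e` and
taking logarithms, one needs `d * log c - e * log b ∈ (log a, log (a + 1))`. Since
`log c / log b` is irrational, the multiples of `log c` are dense in the circle `ℝ / (log b) ℤ`,
and in a compact group the multiples by large natural numbers already accumulate everywhere,
so infinitely many `d` work; once `c ^ d > a`, the corresponding `e` is automatically positive.
-/

open Filter Set Real Topology

theorem AddCircle.mapClusterPt_atTop_nsmul_coe {a p : ℝ} [Fact (0 < p)] (ha : Irrational (a / p))
    (x : AddCircle p) : MapClusterPt x atTop (fun n : ℕ ↦ n • (a : AddCircle p)) := by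
  refine ((mapClusterPt_atTop_nsmul_tfae x (a : AddCircle p)).out 0 3).mpr ?_
  rw [(AddCircle.denseRange_zsmul_coe_iff.mpr ha).closure_range]
  exact mem_univ x

theorem frequently_exists_int_nat_mul_sub_mem_Ioo {a p : ℝ} (hp : 0 < p) (ha : Irrational (a / p))
    {u v : ℝ} (huv : u < v) :
    ∃ᶠ n : ℕ in atTop, ∃ k : ℤ, n * a - k * p ∈ Ioo u v := by
  have : Fact (0 < p) := ⟨hp⟩
  have hU : (QuotientAddGroup.mk '' Ioo u v : Set (AddCircle p)) ∈
      𝓝 (((u + v) / 2 : ℝ) : AddCircle p) :=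
    QuotientAddGroup.isOpenMap_coe _ isOpen_Ioo |>.mem_nhds
      (mem_image_of_mem _ ⟨by linarith, by linarith⟩)
  refine (AddCircle.mapClusterPt_atTop_nsmul_coe ha _).frequently hU |>.mono ?_
  rintro n ⟨y, hy, hyn⟩
  obtain ⟨k, hk⟩ := AddSubgroup.mem_zmultiples_iff.mp (QuotientAddGroup.eq.mp hyn)
  refine ⟨k, ?_⟩
  simp only [zsmul_eq_mul, nsmul_eq_mul] at hk
  rwa [hk, neg_add_eq_sub, sub_sub_cancel]

theorem exists_pow_eq_mul_pow_add_of_log_mem_Ioo {a b c n : ℕ} {k : ℤ} (ha : 0 < a) (hb : 1 < b)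
    (hcn : a + 1 ≤ c ^ n) (h : n * log c - k * log b ∈ Ioo (log a) (log (a + 1))) :
    ∃ e f : ℕ, 1 ≤ f ∧ f < b ^ e ∧ c ^ n = a * b ^ e + f := by
  have hb' : (1 : ℝ) < b := by exact_mod_cast hb
  have hcn' : (a + 1 : ℝ) ≤ (c : ℝ) ^ n := by exact_mod_cast hcn
  have hbk : (0 : ℝ) < (b : ℝ) ^ k := by positivity
  have hlow : (a : ℝ) * (b : ℝ) ^ k < (c : ℝ) ^ n := by
    rw [← log_lt_log_iff (by positivity) (by linarith), log_mul (by positivity) hbk.ne', log_zpow,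
      log_pow]
    linarith [h.1]
  have hup : (c : ℝ) ^ n < (a + 1) * (b : ℝ) ^ k := by
    rw [← log_lt_log_iff (by linarith) (by positivity), log_mul (by positivity) hbk.ne', log_zpow,
      log_pow]
    linarith [h.2]
  have hk : 0 < k := by
    have : ((a : ℝ) + 1) * 1 < (a + 1) * (b : ℝ) ^ k := by linarith
    exact (one_lt_zpow_iff_right₀ hb').mp (lt_of_mul_lt_mul_left this (by positivity))
  lift k to ℕ using hk.le
  rw [zpow_natCast] at hlow hup
  have hlow' : a * b ^ k < c ^ n := by exact_mod_cast hlow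
  have hup' : c ^ n < a * b ^ k + b ^ k := by rw [← add_one_mul]; exact_mod_cast hup
  exact ⟨k, c ^ n - a * b ^ k, by omega, by omega, by omega⟩

/-- If `a, b, c` are positive integers with `b, c ≥ 2` and `ln b / ln c`
irrational, then there are infinitely many triples `(d, e, f)` of natural
numbers with `1 ≤ f < b ^ e` and `c ^ d = a * b ^ e + f`; i.e. infinitely
many powers of `c` whose base-`b` representation starts with the digit
string of `a`. -/
theorem infinitely_many_powers_with_prefix (a b c : ℕ)
    (ha : 0 < a) (hb : 2 ≤ b) (hc : 2 ≤ c)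
    (hirr : Irrational (Real.log b / Real.log c)) :
    {t : ℕ × ℕ × ℕ |
      1 ≤ t.2.2 ∧ t.2.2 < b ^ t.2.1 ∧ c ^ t.1 = a * b ^ t.2.1 + t.2.2}.Infinite := by
  have hlogb : 0 < log b := log_pos (by exact_mod_cast hb)
  have hrot :
      ∃ᶠ n : ℕ in atTop, ∃ k : ℤ, n * log c - k * log b ∈ Ioo (log a) (log (a + 1)) :=
    frequently_exists_int_nat_mul_sub_mem_Ioo hlogb (by rwa [← inv_div, irrational_inv_iff])
      (log_lt_log (by exact_mod_cast ha) (lt_add_one _))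
  have hlarge : ∀ᶠ n : ℕ in atTop, a + 1 ≤ c ^ n :=
    (tendsto_pow_atTop_atTop_of_one_lt hc).eventually_ge_atTop _
  have hexp : {n | ∃ e f : ℕ, 1 ≤ f ∧ f < b ^ e ∧ c ^ n = a * b ^ e + f}.Infinite :=
    Nat.frequently_atTop_iff_infinite.mp <| (hrot.and_eventually hlarge).mono
      fun _ ⟨⟨_, hk⟩, hn⟩ ↦ exists_pow_eq_mul_pow_add_of_log_mem_Ioo ha hb hn hk
  refine Set.Infinite.of_image Prod.fst (hexp.mono ?_)
  rintro n ⟨e, f, hf⟩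
  exact ⟨(n, e, f), hf, rfl⟩
end

section
/- Let b ≥ 2 be an integer with prime factorization b = p₁^{a₁} p₂^{a₂} ⋯ p_r^{a_r} with r ≥ 2 distinct primes, ordered so that a₁(p₁−1) > a_i(p_i−1) for all i ≥ 2, and let b' = b / p₁^{a₁}. Then for all sufficiently large n, b' divides ℓ_b(n!); in particular ℓ_b(n!) ∈ {b', 2b', …, (p₁^{a₁}−1)·b'} for all sufficiently large n. -/
/-
Write `n! = b^v m` with `b ∤ m`, so that `ℓ_b(n!) = m mod b ≠ 0`. As `p₀^(a₀ v) ∣ n!`, Legendre's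
formula gives `a₀ (p₀ - 1) v ≤ n`, while for `i ≠ 0` it gives `(pᵢ - 1) v_{pᵢ}(n!) = n - s_{pᵢ}(n)`
with a digit sum `s_{pᵢ}(n) = O(log n)`. The strict inequality `aᵢ (pᵢ - 1) < a₀ (p₀ - 1)` leaves
room for that digit sum, so `v_{pᵢ}(n!) ≥ aᵢ (v + 1)` for large `n`, i.e. `pᵢ^aᵢ ∣ m`. Since
`pᵢ^aᵢ ∣ b`, it also divides `m mod b`, and hence so does the product `b'` of these coprime factors.
-/

open Filter Finset Nat

theorem mul_add_one_le_two_pow {c L : ℕ} (hL : 2 * c + 2 ≤ L) : c * (L + 1) ≤ 2 ^ L := by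
  obtain ⟨k, rfl⟩ := Nat.exists_eq_add_of_le hL
  have h₁ : 2 * c + 2 ≤ 2 ^ (c + 1) := by
    have := Nat.lt_two_pow_self (n := c)
    rw [pow_succ]; omega
  have h₂ : c + 2 + k ≤ 2 ^ (c + 1 + k) := by
    have := Nat.lt_two_pow_self (n := c + 1 + k); omega
  calc c * (2 * c + 2 + k + 1) ≤ (2 * c + 2) * (c + 2 + k) := by nlinarith
    _ ≤ 2 ^ (c + 1) * 2 ^ (c + 1 + k) := Nat.mul_le_mul h₁ h₂
    _ = 2 ^ (2 * c + 2 + k) := by rw [← pow_add]; ring_nf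

theorem eventually_mul_log_two_add_one_le (c : ℕ) :
    ∀ᶠ n in atTop, c * (Nat.log 2 n + 1) ≤ n := by
  filter_upwards [eventually_ge_atTop (2 ^ (2 * c + 2))] with n hn
  have hn₀ : n ≠ 0 := (Nat.two_pow_pos _).trans_le hn |>.ne'
  calc c * (Nat.log 2 n + 1) ≤ 2 ^ Nat.log 2 n :=
        mul_add_one_le_two_pow ((Nat.le_log_iff_pow_le one_lt_two hn₀).2 hn)
    _ ≤ n := Nat.pow_log_le_self 2 hn₀

theorem digSum_le_mul_log_two {q : ℕ} (hq : 2 ≤ q) (n : ℕ) :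
    digSum q n ≤ (q - 1) * (Nat.log 2 n + 1) := by
  rcases eq_or_ne n 0 with rfl | hn
  · simp [digSum]
  have hsum : digSum q n ≤ (Nat.digits q n).length * (q - 1) := by
    simpa [digSum] using List.sum_le_card_nsmul (Nat.digits q n) (q - 1)
      fun d hd => Nat.le_sub_one_of_lt (Nat.digits_lt_base hq hd)
  rw [Nat.length_digits q n hq hn] at hsum
  have hlog : Nat.log q n ≤ Nat.log 2 n := Nat.log_anti_left one_lt_two hq
  calc _ ≤ (Nat.log q n + 1) * (q - 1) := hsum
    _ ≤ (q - 1) * (Nat.log 2 n + 1) := by rw [mul_comm]; gcongr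

theorem eventually_mul_add_digSum_le {q : ℕ} (hq : 2 ≤ q) (c k : ℕ) :
    ∀ᶠ n in atTop, c * (k + digSum q n) ≤ n := by
  filter_upwards [eventually_mul_log_two_add_one_le (c * k + c * (q - 1))] with n hn
  calc c * (k + digSum q n) ≤ c * k + c * ((q - 1) * (Nat.log 2 n + 1)) := by
        rw [mul_add]; gcongr; exact digSum_le_mul_log_two hq n
    _ ≤ (c * k + c * (q - 1)) * (Nat.log 2 n + 1) := by
        rw [add_mul, mul_assoc c (q - 1)]
        exact Nat.add_le_add_right (Nat.le_mul_of_pos_right _ (Nat.succ_pos _)) _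
    _ ≤ n := hn

theorem eventually_mul_succ_le_padicValNat_factorial {p q a e : ℕ} [Fact p.Prime] [Fact q.Prime]
    (h : e * (q - 1) < a * (p - 1)) :
    ∀ᶠ n in atTop, ∀ v, a * v ≤ padicValNat p n ! → e * (v + 1) ≤ padicValNat q n ! := by
  filter_upwards [eventually_mul_add_digSum_le (Fact.out : q.Prime).two_le
    (a * (p - 1)) (e * (q - 1))] with n hn v hv
  have hp : (p - 1) * padicValNat p n ! = n - digSum p n := sub_one_mul_padicValNat_factorial n
  have hq : (q - 1) * padicValNat q n ! = n - digSum q n := sub_one_mul_padicValNat_factorial n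
  have hq₁ : 0 < q - 1 := Nat.sub_pos_of_lt (Fact.out : q.Prime).one_lt
  have hv' : a * (p - 1) * v ≤ n := by
    calc a * (p - 1) * v = (p - 1) * (a * v) := by ring
      _ ≤ (p - 1) * padicValNat p n ! := by gcongr
      _ ≤ n := by omega
  have hroom : e * (q - 1) * (v + 1) + digSum q n ≤ n := by
    refine Nat.le_of_mul_le_mul_left ?_ (Nat.zero_lt_of_lt h)
    calc a * (p - 1) * (e * (q - 1) * (v + 1) + digSum q n)
        = e * (q - 1) * (a * (p - 1) * v) + a * (p - 1) * (e * (q - 1) + digSum q n) := by ring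
      _ ≤ e * (q - 1) * n + n := by gcongr
      _ = (e * (q - 1) + 1) * n := by ring
      _ ≤ a * (p - 1) * n := by gcongr; exact h
  refine Nat.le_of_mul_le_mul_left ?_ hq₁
  calc (q - 1) * (e * (v + 1)) = e * (q - 1) * (v + 1) := by ring
    _ ≤ (q - 1) * padicValNat q n ! := by omega

theorem not_dvd_div_pow_padicValNat {b n : ℕ} (hb : b ≠ 1) (hn : n ≠ 0) :
    ¬ b ∣ n / b ^ padicValNat b n := by
  intro hdvd
  have h := Nat.mul_dvd_mul_left (b ^ padicValNat b n) hdvd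
  rw [Nat.mul_div_cancel' pow_padicValNat_dvd, ← pow_succ,
    padicValNat_dvd_iff_le_of_ne_one hb hn] at h
  omega

theorem lnz_ne_zero {b n : ℕ} (hb : b ≠ 1) (hn : n ≠ 0) : lnz b n ≠ 0 :=
  fun h => not_dvd_div_pow_padicValNat hb hn (Nat.dvd_of_mod_eq_zero h)

theorem dvd_lnz {b n d : ℕ} (hdb : d ∣ b) (hd : d ∣ n / b ^ padicValNat b n) : d ∣ lnz b n :=
  (Nat.dvd_mod_iff hdb).2 hd

theorem padicValNat_mul_padicValNat_le {q b n : ℕ} [Fact q.Prime] (hn : n ≠ 0) :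
    padicValNat q b * padicValNat b n ≤ padicValNat q n := by
  rw [← padicValNat_dvd_iff_le hn, pow_mul]
  exact (pow_dvd_pow_of_dvd pow_padicValNat_dvd _).trans pow_padicValNat_dvd

theorem pow_padicValNat_dvd_div_pow_padicValNat {q b n : ℕ} [Fact q.Prime] (hb : b ≠ 0)
    (hn : n ≠ 0) (h : padicValNat q b * (padicValNat b n + 1) ≤ padicValNat q n) :
    q ^ padicValNat q b ∣ n / b ^ padicValNat b n := by
  set v := padicValNat b n
  obtain ⟨m, hnm⟩ : b ^ v ∣ n := pow_padicValNat_dvd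
  have hm : m ≠ 0 := by rintro rfl; exact hn (by rw [hnm, mul_zero])
  rw [hnm, Nat.mul_div_cancel_left _ (Nat.pos_of_ne_zero (pow_ne_zero _ hb)),
    padicValNat_dvd_iff_le hm]
  rw [hnm, padicValNat.mul (pow_ne_zero _ hb) hm, padicValNat.pow] at h
  linarith

theorem prod_pow_dvd_of_forall_pow_dvd {ι : Type*} {s : Finset ι} {p a : ι → ℕ} {z : ℕ}
    (hp : ∀ i ∈ s, (p i).Prime) (hinj : Set.InjOn p s) (h : ∀ i ∈ s, p i ^ a i ∣ z) :
    ∏ i ∈ s, p i ^ a i ∣ z := by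
  rw [← Finset.lcm_eq_prod fun i hi j hj hij => Nat.Coprime.pow _ _
    ((Nat.coprime_primes (hp i hi) (hp j hj)).2 fun h => hij (hinj hi hj h))]
  exact Finset.lcm_dvd h

theorem padicValNat_prod_pow {ι : Type*} [Fintype ι] {p : ι → ℕ} (a : ι → ℕ)
    (hp : ∀ i, (p i).Prime) (hinj : Function.Injective p) (i : ι) :
    padicValNat (p i) (∏ j, p j ^ a j) = a i := by
  classical
  rw [← Nat.factorization_def _ (hp i),
    Nat.factorization_prod fun j _ => pow_ne_zero _ (hp j).ne_zero]
  simp [Finset.sum_apply', (hp _).factorization_pow, Finsupp.single_apply, hinj.eq_iff]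

theorem exists_eq_mul_of_dvd_of_lt_mul {x d k : ℕ} (hx : x ≠ 0) (hd : d ∣ x) (hlt : x < k * d) :
    ∃ j, 1 ≤ j ∧ j ≤ k - 1 ∧ x = j * d := by
  obtain ⟨j, rfl⟩ := hd
  refine ⟨j, Nat.one_le_iff_ne_zero.2 (right_ne_zero_of_mul hx), ?_, mul_comm _ _⟩
  have : j < k := Nat.lt_of_mul_lt_mul_right (a := d) (by rwa [mul_comm d j] at hlt)
  omega

/-- Let `b = ∏ i, p i ^ a i` with `r ≥ 2` distinct primes, ordered so that
`a 0 * (p 0 - 1) > a i * (p i - 1)` for all `i ≠ 0`, and let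
`b' = b / p 0 ^ a 0`.  Then for all sufficiently large `n`, `b'` divides
`ℓ_b (n !)`; in particular `ℓ_b (n !) ∈ {b', 2 b', …, (p 0 ^ a 0 - 1) b'}`. -/
theorem lnz_factorial_divisible_of_strict_max (b r : ℕ) (hb : 2 ≤ b) (hr : 2 ≤ r)
    (p a : Fin r → ℕ) (hp : ∀ i, (p i).Prime) (hpinj : Function.Injective p)
    (hfac : b = ∏ i, p i ^ a i)
    (hmax : ∀ i : Fin r, i ≠ ⟨0, by omega⟩ →
      a i * (p i - 1) < a ⟨0, by omega⟩ * (p ⟨0, by omega⟩ - 1))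
    (b' : ℕ) (hb' : b' = b / p ⟨0, by omega⟩ ^ a ⟨0, by omega⟩) :
    ∃ N : ℕ, ∀ n : ℕ, N ≤ n →
      b' ∣ lnz b (Nat.factorial n) ∧
      ∃ j : ℕ, 1 ≤ j ∧ j ≤ p ⟨0, by omega⟩ ^ a ⟨0, by omega⟩ - 1 ∧
        lnz b (Nat.factorial n) = j * b' := by
  set i₀ : Fin r := ⟨0, by omega⟩
  have hval : ∀ i, padicValNat (p i) b = a i := hfac ▸ padicValNat_prod_pow a hp hpinj
  have hb'prod : b' = ∏ i ∈ univ.erase i₀, p i ^ a i := by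
    rw [hb', hfac, ← mul_prod_erase _ _ (mem_univ i₀),
      Nat.mul_div_cancel_left _ (pow_pos (hp i₀).pos _)]
  have hsplit : b = p i₀ ^ a i₀ * b' := by
    rw [hb'prod, hfac]; exact (mul_prod_erase _ _ (mem_univ i₀)).symm
  have hev : ∀ᶠ n in atTop, ∀ i ∈ univ.erase i₀, p i ^ a i ∣ n ! / b ^ padicValNat b n ! := by
    refine (eventually_all_finset _).2 fun i hi => ?_
    have := Fact.mk (hp i)
    have := Fact.mk (hp i₀)
    filter_upwards [eventually_mul_succ_le_padicValNat_factorial (hmax i (ne_of_mem_erase hi))]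
      with n hn
    rw [← hval i]
    refine pow_padicValNat_dvd_div_pow_padicValNat (by omega) (factorial_ne_zero n) ?_
    rw [hval]
    exact hn _ (hval i₀ ▸ padicValNat_mul_padicValNat_le (factorial_ne_zero n))
  obtain ⟨N, hN⟩ := eventually_atTop.1 hev
  refine ⟨N, fun n hn => ?_⟩
  have hdvd : b' ∣ lnz b n ! := dvd_lnz (hsplit ▸ dvd_mul_left _ _) <| hb'prod ▸
    prod_pow_dvd_of_forall_pow_dvd (fun i _ => hp i) hpinj.injOn (hN n hn)
  refine ⟨hdvd, exists_eq_mul_of_dvd_of_lt_mul (lnz_ne_zero (by omega) (factorial_ne_zero n))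
    hdvd ?_⟩
  rw [← hsplit]
  exact Nat.mod_lt _ (by omega)
end
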